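/- For all positive integers K and t with 2t ≤ K, set α = gcd(K, t), F = (2t/α) · C(K/α, 2t/α), Z = (t/α) · C(K/α − 1, 2t/α − 1), and S = ((K−t)/α) · C(K/α, 2t/α), where C(n,k) denotes the binomial coefficient. Then there exists a (t, K, F, Z, S) multiple-antenna placement delivery array, and moreover 2t · S = (K−t) · F, so the normalized delivery time S/F equals (K−t)/(2t). -/

import Mathlib

/-- An `(L, K, F, Z, S)` multiple-antenna placement delivery array (MAPDA). -/
def IsMAPDA (L K F Z S : ℕ) (P : Fin F → Fin K → Option (Fin S)) : Prop :=
  (∀ k : Fin K, (Finset.univ.filter fun f : Fin F => P f k = none).card = Z) ∧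
  (∀ s : Fin S, ∃ f k, P f k = some s) ∧
  (∀ (s : Fin S) (k : Fin K) (f₁ f₂ : Fin F),
      P f₁ k = some s → P f₂ k = some s → f₁ = f₂) ∧
  (∀ (s : Fin S) (f : Fin F), (∃ k, P f k = some s) →
      (Finset.univ.filter fun k : Fin K =>
        (∃ f', P f' k = some s) ∧ (P f k).isSome = true).card ≤ L)

/-!
Write `K = α q` and `t = α l`. It suffices to build an `(l, q, F, Z, S)` array and to repeat
each of its columns `α` times, which multiplies `L` and `K` by `α` and changes nothing else.

Rows are pairs `(A, b)`: a `2l`-subset `A` of `[q]`, whose elements are numbered cyclically by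
`ℤ/2l`, and an offset `b`. In row `(A, b)` the elements of `A` at offsets `b + l, …, b + 2l - 1`
are stars, the element at offset `b + u` (`u < l`) carries the symbol `(A, u)`, and a column
`j ∉ A` carries the symbol `(A - x + j, x)`, where `x` is the element at offset `b`. A symbol is
thus confined to a `2l`-set (`A`, resp. `A - x + j`) that contains the `l` stars of every row
in which it occurs, so each such row has only `l` integer entries among its columns. A symbol
and a column containing it determine the row, since `A = (A - x + j) - j + x`.
-/

theorem Fin.castAdd_ne_natAdd {m n : ℕ} (u : Fin m) (v : Fin n) :
    Fin.castAdd n u ≠ Fin.natAdd m v :=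
  Fin.ne_of_val_ne (by simp only [Fin.val_castAdd, Fin.val_natAdd]; omega)

theorem Equiv.option_map_eq_some_iff {α β : Type*} (e : α ≃ β) (o : Option α) (b : β) :
    o.map e = some b ↔ o = some (e.symm b) := by
  cases o <;> simp [Equiv.eq_symm_apply]

structure IsMAPDAOn {R C X : Type*} (L Z : ℕ) (P : R → C → Option X) : Prop where
  card_none : ∀ k, Nat.card {f // P f k = none} = Z
  exists_eq_some : ∀ s, ∃ f k, P f k = some s
  eq_of_eq_some : ∀ s k f₁ f₂, P f₁ k = some s → P f₂ k = some s → f₁ = f₂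
  card_le : ∀ s f, (∃ k, P f k = some s) →
    Nat.card {k // (∃ f', P f' k = some s) ∧ (P f k).isSome} ≤ L

namespace IsMAPDAOn

variable {R C X : Type*} {L Z : ℕ} {P : R → C → Option X}

theorem isMAPDA {K F S : ℕ} {P : Fin F → Fin K → Option (Fin S)} (h : IsMAPDAOn L Z P) :
    IsMAPDA L K F Z S P := by
  simp only [IsMAPDA, ← Fintype.card_subtype, ← Nat.card_eq_fintype_card]
  exact ⟨h.card_none, h.exists_eq_some, h.eq_of_eq_some, h.card_le⟩

theorem replicate (h : IsMAPDAOn L Z P) (ι : Type*) [Nonempty ι] :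
    IsMAPDAOn (L * Nat.card ι) Z fun f (k : C × ι) => P f k.1 where
  card_none k := h.card_none k.1
  exists_eq_some s := by
    obtain ⟨f, k, hfk⟩ := h.exists_eq_some s
    exact ⟨f, (k, Classical.arbitrary ι), hfk⟩
  eq_of_eq_some s k := h.eq_of_eq_some s k.1
  card_le s f := by
    rintro ⟨k, hk⟩
    rw [Nat.card_congr (Equiv.prodSubtypeFstEquivSubtypeProd
      (p := fun c => (∃ f', P f' c = some s) ∧ (P f c).isSome)), Nat.card_prod]
    exact Nat.mul_le_mul_right _ (h.card_le s f ⟨k.1, hk⟩)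

theorem reindex (h : IsMAPDAOn L Z P) {R' C' X' : Type*} (eR : R' ≃ R) (eC : C' ≃ C)
    (eX : X ≃ X') : IsMAPDAOn L Z fun f k => (P (eR f) (eC k)).map eX where
  card_none k := by
    rw [← h.card_none (eC k)]
    exact Nat.card_congr (eR.subtypeEquiv fun f => by simp)
  exists_eq_some s := by
    obtain ⟨f, k, hfk⟩ := h.exists_eq_some (eX.symm s)
    exact ⟨eR.symm f, eC.symm k, by simp [hfk]⟩
  eq_of_eq_some s k f₁ f₂ h₁ h₂ := by
    simp only [Equiv.option_map_eq_some_iff] at h₁ h₂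
    exact eR.injective (h.eq_of_eq_some _ _ _ _ h₁ h₂)
  card_le s f := by
    rintro ⟨k, hk⟩
    simp only [Equiv.option_map_eq_some_iff, Option.isSome_map] at hk ⊢
    refine le_of_eq_of_le (Nat.card_congr (eC.subtypeEquiv fun k => ?_)) (h.card_le _ _ ⟨_, hk⟩)
    exact and_congr_left'
      ⟨fun ⟨f', hf'⟩ => ⟨_, hf'⟩, fun ⟨r, hr⟩ => ⟨eR.symm r, by simpa using hr⟩⟩

end IsMAPDAOn

namespace SilencedMAPDA

open Finset

abbrev Block (q l : ℕ) := {A : Finset (Fin q) // #A = 2 * l}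

namespace Block

variable {q l : ℕ} (A : Block q l)

def nth (b : Fin (l + l)) : Fin q := A.1.orderIsoOfFin (A.2.trans (two_mul l)) b

def pos {j : Fin q} (hj : j ∈ A.1) : Fin (l + l) :=
  (A.1.orderIsoOfFin (A.2.trans (two_mul l))).symm ⟨j, hj⟩

theorem nth_mem (b : Fin (l + l)) : A.nth b ∈ A.1 :=
  (A.1.orderIsoOfFin (A.2.trans (two_mul l)) b).2

theorem nth_injective : Function.Injective A.nth :=
  Subtype.val_injective.comp (A.1.orderIsoOfFin (A.2.trans (two_mul l))).injective

theorem pos_eq_iff {j : Fin q} (hj : j ∈ A.1) {b : Fin (l + l)} :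
    A.pos hj = b ↔ A.nth b = j := by
  rw [pos, OrderIso.symm_apply_eq, nth, Subtype.ext_iff, eq_comm]

theorem nth_pos {j : Fin q} (hj : j ∈ A.1) : A.nth (A.pos hj) = j := (A.pos_eq_iff hj).1 rfl

def exchange {x j : Fin q} (hx : x ∈ A.1) (hj : j ∉ A.1) : Block q l :=
  ⟨insert j (A.1.erase x), by
    rw [card_insert_of_notMem (fun h => hj (mem_of_mem_erase h)), card_erase_add_one hx, A.2]⟩

theorem not_mem_exchange {x j : Fin q} (hx : x ∈ A.1) (hj : j ∉ A.1) :
    x ∉ (A.exchange hx hj).1 := by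
  simp only [exchange, mem_insert, mem_erase, ne_eq, not_true_eq_false, false_and, or_false]
  rintro rfl
  exact hj hx

theorem erase_exchange {x j : Fin q} (hx : x ∈ A.1) (hj : j ∉ A.1) :
    (A.exchange hx hj).1.erase j = A.1.erase x :=
  erase_insert fun h => hj (mem_of_mem_erase h)

theorem exchange_exchange {x j : Fin q} (hx : x ∈ A.1) (hj : j ∉ A.1) :
    (A.exchange hx hj).exchange (mem_insert_self j _) (A.not_mem_exchange hx hj) = A :=
  Subtype.ext <| by
    change insert x ((A.exchange hx hj).1.erase j) = A.1
    rw [erase_exchange, insert_erase hx]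

variable [NeZero l]

theorem pos_sub_eq_iff {j : Fin q} (hj : j ∈ A.1) {b d : Fin (l + l)} :
    A.pos hj - b = d ↔ A.nth (b + d) = j := by
  rw [sub_eq_iff_eq_add', A.pos_eq_iff]

end Block

abbrev Symbol (q l : ℕ) := (Block q l × Fin l) ⊕ {p : Block q l × Fin q // p.2 ∉ p.1.1}

def Symbol.block {q l : ℕ} : Symbol q l → Block q l
  | .inl (A, _) => A
  | .inr ⟨(G, _), _⟩ => G

variable {q l : ℕ}

def stars (A : Block q l) (b : Fin (l + l)) : Finset (Fin q) :=
  univ.image fun u => A.nth (b + Fin.natAdd l u)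

theorem mem_stars {A : Block q l} {b : Fin (l + l)} {j : Fin q} :
    j ∈ stars A b ↔ ∃ u, A.nth (b + Fin.natAdd l u) = j := by
  simp [stars]

def entry (A : Block q l) (b : Fin (l + l)) (j : Fin q) : Option (Symbol q l) :=
  if hj : j ∈ A.1 then
    Fin.addCases (fun u => some (.inl (A, u))) (fun _ => none) (A.pos hj - b)
  else
    some (.inr ⟨(A.exchange (A.nth_mem b) hj, A.nth b), A.not_mem_exchange (A.nth_mem b) hj⟩)

theorem entry_eq_inr_iff {A G : Block q l} {b : Fin (l + l)} {j x : Fin q} {hx : x ∉ G.1} :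
    entry A b j = some (.inr ⟨(G, x), hx⟩) ↔
      ∃ hj : j ∈ G.1, A = G.exchange hj hx ∧ A.nth b = x := by
  constructor
  · intro h
    have hjA : j ∉ A.1 := by
      intro hjA
      simp only [entry, dif_pos hjA] at h
      generalize A.pos hjA - b = d at h
      cases d using Fin.addCases <;>
        simp only [Fin.addCases_left, Fin.addCases_right, Option.some.injEq, reduceCtorEq] at h
    simp only [entry, dif_neg hjA, Option.some.injEq, Sum.inr.injEq, Subtype.mk.injEq,
      Prod.mk.injEq] at h
    obtain ⟨rfl, rfl⟩ := h
    exact ⟨mem_insert_self _ _, (A.exchange_exchange _ hjA).symm, rfl⟩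
  · rintro ⟨hjG, rfl, hb⟩
    have hjA := G.not_mem_exchange hjG hx
    simp only [entry, dif_neg hjA, Option.some.injEq, Sum.inr.injEq, Subtype.mk.injEq,
      Prod.mk.injEq]
    refine ⟨Subtype.ext ?_, hb⟩
    change insert j ((G.exchange hjG hx).1.erase _) = G.1
    rw [hb, G.erase_exchange, insert_erase hjG]

theorem card_stars (A : Block q l) (b : Fin (l + l)) : #(stars A b) = l := by
  rw [stars, card_image_of_injective _ fun u v h =>
    Fin.natAdd_injective l l (add_left_cancel (A.nth_injective h)), card_fin]

theorem card_rows : Fintype.card (Block q l × Fin (l + l)) = 2 * l * q.choose (2 * l) := by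
  rw [Fintype.card_prod, Fintype.card_finset_len, Fintype.card_fin, Fintype.card_fin]
  ring

theorem card_symbol (hlq : 2 * l ≤ q) :
    Fintype.card (Symbol q l) = (q - l) * q.choose (2 * l) := by
  rw [Fintype.card_sum, Fintype.card_prod, Fintype.card_congr
    (Equiv.subtypeProdEquivSigmaSubtype fun (G : Block q l) x => x ∉ G.1), Fintype.card_sigma]
  simp only [Fintype.card_subtype_compl, Fintype.card_coe, Fintype.card_fin,
    Fintype.card_finset_len]
  rw [sum_congr rfl fun G _ => congrArg (q - ·) G.2, sum_const, card_univ,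
    Fintype.card_finset_len, Fintype.card_fin, smul_eq_mul, ← mul_add, mul_comm]
  congr 1
  omega

variable [NeZero l]

theorem entry_eq_none_iff {A : Block q l} {b : Fin (l + l)} {j : Fin q} :
    entry A b j = none ↔ j ∈ stars A b := by
  rw [mem_stars]
  by_cases hj : j ∈ A.1
  · simp only [entry, dif_pos hj, ← A.pos_sub_eq_iff hj]
    induction A.pos hj - b using Fin.addCases with
    | left v =>
      simp only [Fin.addCases_left, reduceCtorEq, false_iff, not_exists]
      exact fun u => Fin.castAdd_ne_natAdd v u
    | right v => simp only [Fin.addCases_right]; simp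
  · simp only [entry, dif_neg hj, reduceCtorEq, false_iff, not_exists]
    rintro u rfl
    exact hj (A.nth_mem _)

theorem entry_eq_inl_iff {A A' : Block q l} {b : Fin (l + l)} {j : Fin q} {u : Fin l} :
    entry A b j = some (.inl (A', u)) ↔ A = A' ∧ A.nth (b + Fin.castAdd l u) = j := by
  by_cases hj : j ∈ A.1
  · simp only [entry, dif_pos hj, ← A.pos_sub_eq_iff hj]
    induction A.pos hj - b using Fin.addCases with
    | left v => simp [eq_comm]
    | right v =>
      simp only [Fin.addCases_right, reduceCtorEq, false_iff, not_and]
      exact fun _ h => Fin.castAdd_ne_natAdd u v h.symm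
  · simp only [entry, dif_neg hj, Option.some.injEq, reduceCtorEq, false_iff, not_and]
    rintro - rfl
    exact hj (A.nth_mem _)

theorem stars_subset_erase (A : Block q l) (b : Fin (l + l)) :
    stars A b ⊆ A.1.erase (A.nth b) := by
  intro j hj
  obtain ⟨u, rfl⟩ := mem_stars.1 hj
  refine mem_erase.2 ⟨fun h => ?_, A.nth_mem _⟩
  have := congrArg Fin.val (add_eq_left.1 (A.nth_injective h))
  simp only [Fin.natAdd, Fin.val_zero] at this
  exact NeZero.ne l (by omega)

theorem mem_block_of_entry_eq_some {A : Block q l} {b : Fin (l + l)} {j : Fin q} {s : Symbol q l}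
    (h : entry A b j = some s) : j ∈ s.block.1 := by
  rcases s with ⟨A', u⟩ | ⟨⟨G, x⟩, hx⟩
  · obtain ⟨rfl, rfl⟩ := entry_eq_inl_iff.1 h
    exact A.nth_mem _
  · exact (entry_eq_inr_iff.1 h).1

theorem stars_subset_block_of_entry_eq_some {A : Block q l} {b : Fin (l + l)} {j : Fin q}
    {s : Symbol q l} (h : entry A b j = some s) : stars A b ⊆ s.block.1 := by
  refine (stars_subset_erase A b).trans ?_
  rcases s with ⟨A', u⟩ | ⟨⟨G, x⟩, hx⟩
  · obtain ⟨rfl, -⟩ := entry_eq_inl_iff.1 h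
    exact erase_subset _ _
  · obtain ⟨hj, rfl, hb⟩ := entry_eq_inr_iff.1 h
    rw [hb, G.erase_exchange]
    exact erase_subset _ _

theorem card_filter_mem_stars {A : Block q l} {j : Fin q} (hj : j ∈ A.1) :
    #{b | j ∈ stars A b} = l := by
  have hfilter :
      ({b | j ∈ stars A b} : Finset _) = univ.image fun u => A.pos hj - Fin.natAdd l u := by
    ext b
    simp only [mem_filter, mem_univ, true_and, mem_stars, mem_image, sub_eq_iff_eq_add,
      A.pos_eq_iff]
  rw [hfilter, card_image_of_injective _ fun u v h =>
    Fin.natAdd_injective l l (sub_right_injective h), card_fin]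

theorem card_filter_mem_block (j : Fin q) :
    #{A : Block q l | j ∈ A.1} = (q - 1).choose (2 * l - 1) := by
  have hl : 1 ≤ 2 * l := by have := NeZero.pos l; omega
  have h := card_filter_powersetCard_subset {j} univ (2 * l) (subset_univ _) (by simpa using hl)
  simp only [card_univ, Fintype.card_fin, card_singleton, singleton_subset_iff] at h
  rw [← h]
  refine card_bij (fun A _ => A.1) (fun A hA => ?_) (fun _ _ _ _ => Subtype.ext) fun s hs => ?_
  · simp only [mem_filter, mem_univ, true_and] at hA
    simp [hA, A.2]
  · simp only [mem_filter, mem_powersetCard, subset_univ, true_and] at hs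
    exact ⟨⟨s, hs.1⟩, by simpa using hs.2, rfl⟩

theorem card_rows_mem_stars (j : Fin q) :
    Nat.card {r : Block q l × Fin (l + l) // j ∈ stars r.1 r.2} =
      l * (q - 1).choose (2 * l - 1) := by
  have hrow (A : Block q l) : Nat.card {b // j ∈ stars A b} = if j ∈ A.1 then l else 0 := by
    rw [Nat.card_eq_fintype_card, Fintype.card_subtype]
    split_ifs with hj
    · exact card_filter_mem_stars hj
    · exact card_eq_zero.2 <| filter_eq_empty_iff.2 fun b _ h =>
        hj <| mem_of_mem_erase (stars_subset_erase A b h)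
  rw [Nat.card_congr (Equiv.subtypeProdEquivSigmaSubtype fun A b => j ∈ stars A b),
    Nat.card_sigma]
  simp only [hrow, sum_ite, sum_const_zero, add_zero, sum_const, smul_eq_mul,
    card_filter_mem_block, mul_comm]

theorem card_cols_isSome_le {A : Block q l} {b : Fin (l + l)} {j : Fin q} {s : Symbol q l}
    (h : entry A b j = some s) :
    Nat.card {k // (∃ r : Block q l × Fin (l + l), entry r.1 r.2 k = some s) ∧
      (entry A b k).isSome} ≤ l := by
  rw [Nat.card_eq_fintype_card, Fintype.card_subtype]
  refine (card_le_card (t := s.block.1 \ stars A b) fun k hk => ?_).trans_eq ?_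
  · simp only [mem_filter, mem_univ, true_and] at hk
    obtain ⟨⟨r, hr⟩, hsome⟩ := hk
    refine mem_sdiff.2 ⟨mem_block_of_entry_eq_some hr, fun hk => ?_⟩
    simp [entry_eq_none_iff.2 hk] at hsome
  · rw [card_sdiff_of_subset (stars_subset_block_of_entry_eq_some h), s.block.2, card_stars]
    omega

theorem isMAPDAOn_entry :
    IsMAPDAOn l (l * (q - 1).choose (2 * l - 1))
      fun (r : Block q l × Fin (l + l)) j => entry r.1 r.2 j where
  card_none j := by simpa only [entry_eq_none_iff] using card_rows_mem_stars j
  exists_eq_some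
    | .inl (A, u) =>
      ⟨(A, 0), A.nth (Fin.castAdd l u), entry_eq_inl_iff.2 ⟨rfl, by rw [zero_add]⟩⟩
    | .inr ⟨(G, x), hx⟩ => by
      obtain ⟨j, hj⟩ : G.1.Nonempty := card_pos.1 (by rw [G.2]; exact Nat.pos_of_neZero _)
      let A := G.exchange hj hx
      exact ⟨(A, A.pos (mem_insert_self x _)), j,
        entry_eq_inr_iff.2 ⟨hj, rfl, A.nth_pos _⟩⟩
  eq_of_eq_some s j := by
    rintro ⟨A₁, b₁⟩ ⟨A₂, b₂⟩ h₁ h₂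
    dsimp only at h₁ h₂
    rcases s with ⟨A, u⟩ | ⟨⟨G, x⟩, hx⟩
    · obtain ⟨rfl, rfl⟩ := entry_eq_inl_iff.1 h₁
      obtain ⟨rfl, hb⟩ := entry_eq_inl_iff.1 h₂
      rw [add_right_cancel (Block.nth_injective _ hb)]
    · obtain ⟨hj, rfl, hb₁⟩ := entry_eq_inr_iff.1 h₁
      obtain ⟨hj', rfl, hb₂⟩ := entry_eq_inr_iff.1 h₂
      rw [Block.nth_injective _ (hb₁.trans hb₂.symm)]
  card_le s r := fun ⟨_, h⟩ => card_cols_isSome_le h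

theorem exists_isMAPDA (a q l : ℕ) [NeZero a] [NeZero l] (hlq : 2 * l ≤ q) :
    ∃ P, IsMAPDA (a * l) (a * q) (2 * l * q.choose (2 * l)) (l * (q - 1).choose (2 * l - 1))
      ((q - l) * q.choose (2 * l)) P := by
  have h := (isMAPDAOn_entry (q := q) (l := l)).replicate (Fin a)
  rw [Nat.card_fin, mul_comm] at h
  have hcols : Fintype.card (Fin q × Fin a) = a * q := by simp [mul_comm]
  exact ⟨_, (h.reindex (Fintype.equivFinOfCardEq card_rows).symm
    (Fintype.equivFinOfCardEq hcols).symm (Fintype.equivFinOfCardEq (card_symbol hlq))).isMAPDA⟩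

end SilencedMAPDA

theorem exists_MAPDA_silenced_general (K t : ℕ) (ht : 0 < t) (h2t : 2 * t ≤ K)
    (α F Z S : ℕ) (hα : α = Nat.gcd K t)
    (hF : F = (2 * t / α) * Nat.choose (K / α) (2 * t / α))
    (hZ : Z = (t / α) * Nat.choose (K / α - 1) (2 * t / α - 1))
    (hS : S = ((K - t) / α) * Nat.choose (K / α) (2 * t / α)) :
    (∃ P : Fin F → Fin K → Option (Fin S), IsMAPDA t K F Z S P) ∧
    2 * t * S = (K - t) * F ∧
    (S : ℚ) / (F : ℚ) = ((K - t : ℕ) : ℚ) / (2 * (t : ℚ)) := by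
  have hα0 : 0 < α := hα ▸ Nat.gcd_pos_of_pos_right K ht
  obtain ⟨q, rfl⟩ : α ∣ K := hα ▸ Nat.gcd_dvd_left K t
  obtain ⟨l, rfl⟩ : α ∣ t := hα ▸ Nat.gcd_dvd_right _ t
  have : NeZero α := ⟨hα0.ne'⟩
  have : NeZero l := ⟨by rintro rfl; simp at ht⟩
  have hlq : 2 * l ≤ q := Nat.le_of_mul_le_mul_left (by linarith) hα0
  have hsub : α * q - α * l = α * (q - l) := (Nat.mul_sub α q l).symm
  have h2l : 2 * (α * l) / α = 2 * l := by rw [mul_left_comm, Nat.mul_div_cancel_left _ hα0]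
  simp only [h2l, hsub, Nat.mul_div_cancel_left _ hα0] at hF hZ hS
  subst hF hZ hS
  have harith : 2 * (α * l) * ((q - l) * q.choose (2 * l)) =
      (α * q - α * l) * (2 * l * q.choose (2 * l)) := by
    rw [hsub]; ring
  refine ⟨SilencedMAPDA.exists_isMAPDA α q l hlq, harith, ?_⟩
  have hF0 : 0 < 2 * l * q.choose (2 * l) := by
    have := Nat.choose_pos hlq; have := NeZero.pos l; positivity
  have ht' : (0 : ℚ) < (α * l : ℕ) := by exact_mod_cast ht
  rw [div_eq_div_iff (by exact_mod_cast hF0.ne') (by positivity)]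
  exact_mod_cast (mul_comm _ _).trans harith

/-- For all positive integers `K` and `t` with `2t ≤ K`, with `α = gcd(K, t)`,
`F = (2t/α)·C(K/α, 2t/α)`, `Z = (t/α)·C(K/α − 1, 2t/α − 1)` and
`S = ((K−t)/α)·C(K/α, 2t/α)`, there exists a `(t, K, F, Z, S)` MAPDA, and
moreover `2t·S = (K−t)·F`, so the NDT `S/F` equals `(K−t)/(2t)`. -/
theorem exists_MAPDA_silenced (K t : ℕ) (hK : 0 < K) (ht : 0 < t) (h2t : 2 * t ≤ K)
    (α F Z S : ℕ) (hα : α = Nat.gcd K t)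
    (hF : F = (2 * t / α) * Nat.choose (K / α) (2 * t / α))
    (hZ : Z = (t / α) * Nat.choose (K / α - 1) (2 * t / α - 1))
    (hS : S = ((K - t) / α) * Nat.choose (K / α) (2 * t / α)) :
    (∃ P : Fin F → Fin K → Option (Fin S), IsMAPDA t K F Z S P) ∧
    2 * t * S = (K - t) * F ∧
    (S : ℚ) / (F : ℚ) = ((K - t : ℕ) : ℚ) / (2 * (t : ℚ)) :=
  exists_MAPDA_silenced_general K t ht h2t α F Z S hα hF hZ hS
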